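/- arXiv:1406.1240 — 4 statements merged into one kernel-verified Lean document; each statement's English description precedes it below -/
import Mathlib

section
/- Let R be a local ring. The ring T_2(R) of 2×2 upper triangular matrices over R is very clean if and only if either 2 is a unit in R, or T_2(R) is strongly clean. -/
/-- An element `a` of a ring is *very clean* if there is an idempotent `e` commuting with `a`
such that `a - e` or `a + e` is a unit. -/
def IsVeryClean {R : Type*} [Ring R] (a : R) : Prop :=
  ∃ e : R, IsIdempotentElem e ∧ a * e = e * a ∧ (IsUnit (a - e) ∨ IsUnit (a + e))

/-- A ring is *very clean* if every element is very clean. -/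
def VeryCleanRing (R : Type*) [Ring R] : Prop :=
  ∀ a : R, IsVeryClean a

/-- An element `a` of a ring is *strongly clean* if there is an idempotent `e` commuting with `a`
such that `a - e` is a unit. -/
def IsStronglyClean {R : Type*} [Ring R] (a : R) : Prop :=
  ∃ e : R, IsIdempotentElem e ∧ a * e = e * a ∧ IsUnit (a - e)

/-- A ring is *strongly clean* if every element is strongly clean. -/
def StronglyCleanRing (R : Type*) [Ring R] : Prop :=
  ∀ a : R, IsStronglyClean a

/-- The ring `T₂(R)` of 2×2 upper triangular matrices over `R`,
as a subring of the full 2×2 matrix ring. -/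
def T2 (R : Type*) [Ring R] : Subring (Matrix (Fin 2) (Fin 2) R) where
  carrier := {A | A 1 0 = 0}
  zero_mem' := rfl
  one_mem' := Matrix.one_apply_ne (by decide)
  add_mem' := by
    intro A B hA hB
    simp only [Set.mem_setOf_eq] at *
    simp [Matrix.add_apply, hA, hB]
  neg_mem' := by
    intro A hA
    simp only [Set.mem_setOf_eq] at *
    simp [Matrix.neg_apply, hA]
  mul_mem' := by
    intro A B hA hB
    simp only [Set.mem_setOf_eq] at *
    simp [Matrix.mul_apply, Fin.sum_univ_two, hA, hB]

theorem mem_T2_iff {R : Type*} [Ring R] {A : Matrix (Fin 2) (Fin 2) R} :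
    A ∈ T2 R ↔ A 1 0 = 0 := Iff.rfl

section Aux
variable {R : Type*} [Ring R]

section LocalFacts
variable [IsLocalRing R]

lemma locAdd {a b : R} (h : IsUnit (a + b)) : IsUnit a ∨ IsUnit b := by
  obtain ⟨u, hu⟩ := h
  have h1 : a * ↑u⁻¹ + b * ↑u⁻¹ = 1 := by
    rw [← add_mul, ← hu, Units.mul_inv]
  rcases IsLocalRing.isUnit_or_isUnit_of_add_one h1 with h2 | h2
  · exact Or.inl (by simpa using h2.mul u.isUnit)
  · exact Or.inr (by simpa using h2.mul u.isUnit)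

lemma locSubOne {a : R} (h : ¬ IsUnit a) : IsUnit (a - 1) := by
  rcases locAdd (a := a) (b := 1 - a) (by simp) with h1 | h1
  · exact absurd h1 h
  · simpa using h1.neg

lemma locAddOne {a : R} (h : ¬ IsUnit a) : IsUnit (a + 1) := by
  rcases locAdd (a := a + 1) (b := -a) (by simp) with h1 | h1
  · exact h1
  · exact absurd (by simpa using h1.neg) h

omit [IsLocalRing R] in
lemma unitIdem {e : R} (he : IsIdempotentElem e) (h : IsUnit e) : e = 1 := by
  obtain ⟨u, hu⟩ := h
  calc e = ↑u⁻¹ * ↑u * e := by rw [Units.inv_mul, one_mul]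
  _ = ↑u⁻¹ * (e * e) := by rw [mul_assoc, hu]
  _ = ↑u⁻¹ * e := by rw [he]
  _ = 1 := by rw [← hu, Units.inv_mul]

lemma locIdem {e : R} (he : IsIdempotentElem e) : e = 0 ∨ e = 1 := by
  rcases locAdd (a := e) (b := 1 - e) (by simp) with h1 | h1
  · exact Or.inr (unitIdem he h1)
  · left
    have := unitIdem he.one_sub h1
    linear_combination (norm := noncomm_ring) -this

lemma locPM (h2 : IsUnit (2 : R)) (a : R) : IsUnit (a - 1) ∨ IsUnit (a + 1) := by
  have h3 : IsUnit ((a + 1) + (1 - a)) := by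
    have : (a + 1) + (1 - a) = 2 := by noncomm_ring; simp [two_smul, one_add_one_eq_two]
    rw [this]; exact h2
  rcases locAdd h3 with h | h
  · exact Or.inr h
  · exact Or.inl (by simpa using h.neg)

lemma locSubOneOfAddOne (h2 : ¬ IsUnit (2 : R)) {a : R} (h : IsUnit (a + 1)) :
    IsUnit (a - 1) := by
  have key : (a - 1) + 2 = a + 1 := by rw [sub_eq_add_neg, add_assoc]; norm_num
  rcases locAdd (key ▸ h) with h1 | h1
  · exact h1
  · exact absurd h1 h2

end LocalFacts

lemma t2_isUnit_iff (A : T2 R) :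
    IsUnit A ↔ IsUnit (A.val 0 0) ∧ IsUnit (A.val 1 1) := by
  have hA0 : A.val 1 0 = 0 := A.2
  constructor
  · rintro ⟨u, hu⟩
    set B : T2 R := ↑u⁻¹ with hB
    have hB0 : B.val 1 0 = 0 := B.2
    have h1 : A * B = 1 := by rw [← hu, hB]; exact_mod_cast u.mul_inv
    have h2 : B * A = 1 := by rw [← hu, hB]; exact_mod_cast u.inv_mul
    have h1' : A.val * B.val = 1 := congrArg Subtype.val h1
    have h2' : B.val * A.val = 1 := congrArg Subtype.val h2
    have e1 : A.val 0 0 * B.val 0 0 = 1 := by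
      have := congrFun (congrFun h1' 0) 0
      simpa [Matrix.mul_apply, Fin.sum_univ_two, hA0, hB0] using this
    have e2 : B.val 0 0 * A.val 0 0 = 1 := by
      have := congrFun (congrFun h2' 0) 0
      simpa [Matrix.mul_apply, Fin.sum_univ_two, hA0, hB0] using this
    have e3 : A.val 1 1 * B.val 1 1 = 1 := by
      have := congrFun (congrFun h1' 1) 1
      simpa [Matrix.mul_apply, Fin.sum_univ_two, hA0, hB0] using this
    have e4 : B.val 1 1 * A.val 1 1 = 1 := by
      have := congrFun (congrFun h2' 1) 1
      simpa [Matrix.mul_apply, Fin.sum_univ_two, hA0, hB0] using this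
    exact ⟨⟨⟨_, _, e1, e2⟩, rfl⟩, ⟨⟨_, _, e3, e4⟩, rfl⟩⟩
  · rintro ⟨ha, hd⟩
    set a := A.val 0 0
    set b := A.val 0 1
    set d := A.val 1 1
    obtain ⟨u, hu⟩ := ha
    obtain ⟨v, hv⟩ := hd
    set N : Matrix (Fin 2) (Fin 2) R := !![(↑u⁻¹ : R), -(↑u⁻¹ * b * ↑v⁻¹); 0, ↑v⁻¹] with hN
    have hNmem : N ∈ T2 R := by rw [mem_T2_iff, hN]; simp
    have hAval : A.val = !![a, b; 0, d] := by
      ext i j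
      fin_cases i <;> fin_cases j <;> simp [a, b, d, hA0]
    have key1 : A.val * N = 1 := by
      rw [hAval, hN]
      ext i j
      fin_cases i <;> fin_cases j <;>
        simp [Matrix.mul_apply, Fin.sum_univ_two, Matrix.one_apply, ← hu, ← hv,
          mul_assoc, ← mul_assoc, Units.mul_inv, Units.inv_mul]
    have key2 : N * A.val = 1 := by
      rw [hAval, hN]
      ext i j
      fin_cases i <;> fin_cases j <;>
        simp [Matrix.mul_apply, Fin.sum_univ_two, Matrix.one_apply, ← hu, ← hv,
          mul_assoc, ← mul_assoc, Units.mul_inv, Units.inv_mul]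
    exact ⟨⟨A, ⟨N, hNmem⟩, Subtype.ext key1, Subtype.ext key2⟩, rfl⟩

end Aux

theorem very_clean_T2_iff_two_unit_or_strongly_clean (R : Type*) [Ring R] [IsLocalRing R] :
    VeryCleanRing (T2 R) ↔ IsUnit (2 : R) ∨ StronglyCleanRing (T2 R) := by
  constructor
  · intro hVC
    by_cases h2 : IsUnit (2 : R)
    · exact Or.inl h2
    right
    intro A
    obtain ⟨e, he, hcomm, hu⟩ := hVC A
    refine ⟨e, he, hcomm, ?_⟩
    rcases hu with hu | hu
    · exact hu
    rw [t2_isUnit_iff] at hu ⊢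
    have he0 : e.val 1 0 = 0 := e.2
    have hee : e.val * e.val = e.val := congrArg Subtype.val he
    have he00 : IsIdempotentElem (e.val 0 0) := by
      have := congrFun (congrFun hee 0) 0
      simpa [IsIdempotentElem, Matrix.mul_apply, Fin.sum_univ_two, he0] using this
    have he11 : IsIdempotentElem (e.val 1 1) := by
      have := congrFun (congrFun hee 1) 1
      simpa [IsIdempotentElem, Matrix.mul_apply, Fin.sum_univ_two, he0] using this
    have hsub : ∀ i : Fin 2, (A - e).val i i = A.val i i - e.val i i := fun i => rfl
    have hadd : ∀ i : Fin 2, (A + e).val i i = A.val i i + e.val i i := fun i => rfl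
    rw [hsub, hsub]
    rw [hadd, hadd] at hu
    constructor
    · rcases locIdem he00 with h | h
      · rw [h]; rw [h] at hu; simpa using hu.1
      · rw [h]; rw [h] at hu; exact locSubOneOfAddOne h2 hu.1
    · rcases locIdem he11 with h | h
      · rw [h]; rw [h] at hu; simpa using hu.2
      · rw [h]; rw [h] at hu; exact locSubOneOfAddOne h2 hu.2
  · rintro (h2 | hSC)
    · intro A
      have hone : ∀ i : Fin 2, (1 : T2 R).val i i = 1 := by
        intro i; exact Matrix.one_apply_eq i
      have hsub1 : ∀ i : Fin 2, (A - 1).val i i = A.val i i - 1 := by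
        intro i; show A.val i i - (1 : T2 R).val i i = _; rw [hone]
      have hadd1 : ∀ i : Fin 2, (A + 1).val i i = A.val i i + 1 := by
        intro i; show A.val i i + (1 : T2 R).val i i = _; rw [hone]
      by_cases ha : IsUnit (A.val 0 0) <;> by_cases hd : IsUnit (A.val 1 1)
      · exact ⟨0, IsIdempotentElem.zero, by rw [mul_zero, zero_mul],
          Or.inl (by rw [sub_zero, t2_isUnit_iff]; exact ⟨ha, hd⟩)⟩
      · refine ⟨1, IsIdempotentElem.one, by rw [mul_one, one_mul], ?_⟩
        rcases locPM h2 (A.val 0 0) with h | h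
        · exact Or.inl (by rw [t2_isUnit_iff, hsub1, hsub1]; exact ⟨h, locSubOne hd⟩)
        · exact Or.inr (by rw [t2_isUnit_iff, hadd1, hadd1]; exact ⟨h, locAddOne hd⟩)
      · refine ⟨1, IsIdempotentElem.one, by rw [mul_one, one_mul], ?_⟩
        rcases locPM h2 (A.val 1 1) with h | h
        · exact Or.inl (by rw [t2_isUnit_iff, hsub1, hsub1]; exact ⟨locSubOne ha, h⟩)
        · exact Or.inr (by rw [t2_isUnit_iff, hadd1, hadd1]; exact ⟨locAddOne ha, h⟩)
      · refine ⟨1, IsIdempotentElem.one, by rw [mul_one, one_mul],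
          Or.inl (by rw [t2_isUnit_iff, hsub1, hsub1]; exact ⟨locSubOne ha, locSubOne hd⟩)⟩
    · intro A
      obtain ⟨e, h1, h2, h3⟩ := hSC A
      exact ⟨e, h1, h2, Or.inl h3⟩
end

section
/- Let R be a commutative local ring in which 2 is a unit. Then the full matrix ring M_2(R) is very clean. -/
theorem Matrix.det_sub_one_add_det_add_one_fin_two {R : Type*} [CommRing R]
    (A : Matrix (Fin 2) (Fin 2) R) : (A - 1).det + (A + 1).det = 2 * (A.det + 1) := by
  simp only [det_fin_two, sub_apply, add_apply, one_apply_eq,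
    one_apply_ne Fin.zero_ne_one, one_apply_ne Fin.zero_ne_one.symm]
  ring

theorem IsLocalRing.isUnit_add_one_of_not_isUnit {R : Type*} [Ring R] [IsLocalRing R] {x : R}
    (hx : ¬IsUnit x) : IsUnit (x + 1) :=
  (isUnit_or_isUnit_of_isUnit_add (a := x + 1) (b := -x) (by simp)).resolve_right
    (mt (IsUnit.neg_iff x).mp hx)

theorem IsVeryClean.of_isUnit {R : Type*} [Ring R] {a : R} (ha : IsUnit a) : IsVeryClean a :=
  ⟨0, .zero, by simp, .inl (by simpa using ha)⟩

theorem IsVeryClean.of_isUnit_sub_one_or_isUnit_add_one {R : Type*} [Ring R] {a : R}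
    (ha : IsUnit (a - 1) ∨ IsUnit (a + 1)) : IsVeryClean a :=
  ⟨1, .one, by simp, ha⟩

theorem M2_very_clean_of_two_unit (R : Type*) [CommRing R] [IsLocalRing R]
    (h2 : IsUnit (2 : R)) :
    VeryCleanRing (Matrix (Fin 2) (Fin 2) R) := by
  intro A
  by_cases hA : IsUnit A
  · exact .of_isUnit hA
  apply IsVeryClean.of_isUnit_sub_one_or_isUnit_add_one
  simp only [Matrix.isUnit_iff_isUnit_det] at hA ⊢
  apply IsLocalRing.isUnit_or_isUnit_of_isUnit_add
  rw [Matrix.det_sub_one_add_det_add_one_fin_two]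
  exact h2.mul (IsLocalRing.isUnit_add_one_of_not_isUnit hA)
end

section
/- Let R be a commutative local ring, let m ≥ 1, and let A(x) ∈ M_2(R[[x]]/(x^m)) be a 2×2 matrix over the quotient of the power series ring by the ideal generated by x^m, with A(0) ∈ M_2(R) the matrix of constant coefficients. Then A(x) is very clean in M_2(R[[x]]/(x^m)) if and only if A(0) is very clean in M_2(R). -/
/-- The ring homomorphism `R[[x]]/(x^m) → R` sending a (truncated) power series to its
constant coefficient, for `m ≥ 1`. -/
noncomputable def constantCoeffQuot (R : Type*) [CommRing R] (m : ℕ) (hm : 1 ≤ m) :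
    (PowerSeries R ⧸ Ideal.span {(PowerSeries.X : PowerSeries R) ^ m}) →+* R :=
  Ideal.Quotient.lift _ (PowerSeries.constantCoeff : PowerSeries R →+* R) (by
    intro a ha
    rw [Ideal.mem_span_singleton] at ha
    obtain ⟨b, rfl⟩ := ha
    simp [map_mul, map_pow, zero_pow (by omega : m ≠ 0)])

/-!
Reduction modulo `x` is a surjection `R[[x]]/(x^m) → R` with nilpotent kernel, and so is the
induced map on `2 × 2` matrices. Units lift along such a map, and so do idempotents; the point
is to lift the idempotent so that it still commutes with `A`, which is done by lifting inside the
centralizer of `A`. This works as soon as the idempotent of `A(0)` is the image of an element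
commuting with `A`, e.g. if it is an affine expression `x A(0) + y`. Over a local ring a very
clean decomposition of `A(0)` can always be chosen this way: the idempotent is `0`, `1`, or of
rank one, and in the last case `A(0) = α e + β (1 - e)` with `β` a unit; then either `α - β` is a
unit and `e = (A(0) - β) / (α - β)`, or `α` is a unit too and `A(0)` itself is a unit.
-/

section Lifting

variable {S R : Type*} [Ring S] [Ring R]

theorem IsVeryClean.map {F : Type*} [FunLike F S R] [RingHomClass F S R] {a : S}
    (ha : IsVeryClean a) (f : F) : IsVeryClean (f a) := by
  obtain ⟨e, he, hae, hu⟩ := ha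
  refine ⟨f e, he.map f, by rw [← map_mul, hae, map_mul], ?_⟩
  rw [← map_sub, ← map_add]
  exact hu.imp (·.map f) (·.map f)

theorem isUnit_of_isUnit_map_of_ker_isNilpotent [IsDedekindFiniteMonoid S] {f : S →+* R}
    (hf : Function.Surjective f) (hker : ∀ x ∈ RingHom.ker f, IsNilpotent x) {s : S}
    (hs : IsUnit (f s)) : IsUnit s := by
  obtain ⟨t, ht⟩ := hf ↑hs.unit⁻¹
  have hst : s * t - 1 ∈ RingHom.ker f := by simp [RingHom.mem_ker, ht]
  exact isUnit_of_mul_isUnit_left (by simpa using (hker _ hst).isUnit_add_one)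

theorem IsVeryClean.of_map_of_ker_isNilpotent [IsDedekindFiniteMonoid S] {f : S →+* R}
    (hf : Function.Surjective f) (hker : ∀ x ∈ RingHom.ker f, IsNilpotent x) {a c : S}
    (hac : Commute a c) (hc : IsIdempotentElem (f c))
    (hu : IsUnit (f a - f c) ∨ IsUnit (f a + f c)) : IsVeryClean a := by
  set Z := Subring.centralizer ({a} : Set S)
  have hcZ : c ∈ Z := Subring.mem_centralizer_iff.mpr (by simpa using hac.eq)
  have hkerZ : ∀ x ∈ RingHom.ker (f.comp Z.subtype), IsNilpotent x := fun x hx ↦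
    (IsNilpotent.map_iff (f := Z.subtype) Subtype.val_injective).mp (hker _ hx)
  obtain ⟨e, he, hfe⟩ :=
    exists_isIdempotentElem_eq_of_ker_isNilpotent _ hkerZ (f c) ⟨⟨c, hcZ⟩, rfl⟩ hc
  have hae : a * e = e * a := Subring.mem_centralizer_iff.mp e.2 a rfl
  refine ⟨e, congrArg Subtype.val he.eq, hae, ?_⟩
  have hfe' : f e = f c := hfe
  rw [← hfe', ← map_sub, ← map_add] at hu
  exact hu.imp (isUnit_of_isUnit_map_of_ker_isNilpotent hf hker)
    (isUnit_of_isUnit_map_of_ker_isNilpotent hf hker)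

end Lifting

namespace Matrix

variable {n S : Type*} [Fintype n] [DecidableEq n] [CommRing S]

theorem isNilpotent_of_forall_isNilpotent_apply {B : Matrix n n S}
    (hB : ∀ i j, IsNilpotent (B i j)) : IsNilpotent B := by
  set J : Ideal S := Ideal.span (Set.range fun p : n × n ↦ B p.1 p.2)
  have hJ : J.FG := Submodule.fg_span (Set.finite_range _)
  obtain ⟨k, hk⟩ := hJ.isNilpotent_iff_le_nilradical.mpr <|
    Ideal.span_le.mpr <| by rintro _ ⟨p, rfl⟩; exact mem_nilradical.mpr (hB p.1 p.2)
  have hpow : ∀ k i j, (B ^ k) i j ∈ J ^ k := by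
    intro k
    induction k with
    | zero => simp
    | succ k ih =>
      intro i j
      rw [pow_succ B, mul_apply, pow_succ J]
      exact Ideal.sum_mem _ fun l _ ↦
        Ideal.mul_mem_mul (ih i l) (Ideal.subset_span ⟨(l, j), rfl⟩)
  refine ⟨k, ext fun i j ↦ ?_⟩
  simpa [hk] using hpow k i j

end Matrix

theorem RingHom.mapMatrix_surjective {n S R : Type*} [Fintype n] [DecidableEq n]
    [Semiring S] [Semiring R] {f : S →+* R} (hf : Function.Surjective f) :
    Function.Surjective (f.mapMatrix : Matrix n n S →+* Matrix n n R) :=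
  fun B ↦ ⟨B.map (Function.surjInv hf), by ext; simp [Function.surjInv_eq hf]⟩

theorem RingHom.ker_mapMatrix_isNilpotent {n S R : Type*} [Fintype n] [DecidableEq n]
    [CommRing S] [Semiring R] {f : S →+* R} (hker : ∀ x ∈ RingHom.ker f, IsNilpotent x) :
    ∀ B ∈ RingHom.ker (f.mapMatrix : Matrix n n S →+* Matrix n n R), IsNilpotent B := by
  intro B hB
  refine Matrix.isNilpotent_of_forall_isNilpotent_apply fun i j ↦ hker _ ?_
  simpa using congrArg (fun M : Matrix n n R ↦ M i j) (RingHom.mem_ker.mp hB)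

theorem IsIdempotentElem.eq_zero_or_eq_one_of_isLocalRing {R : Type*} [CommRing R]
    [IsLocalRing R] {a : R} (ha : IsIdempotentElem a) : a = 0 ∨ a = 1 := by
  rcases IsLocalRing.isUnit_or_isUnit_one_sub_self a with h | h
  · exact .inr ((IsIdempotentElem.iff_eq_one_of_isUnit h).mp ha)
  · exact .inl (by simpa using (IsIdempotentElem.iff_eq_one_of_isUnit h).mp ha.one_sub)

namespace Matrix

variable {R : Type*} [CommRing R]

theorem mul_mul_self_fin_two (e X : Matrix (Fin 2) (Fin 2) R) :
    e * X * e = (e * X).trace • e - e.det • X.adjugate := by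
  ext i j
  fin_cases i <;> fin_cases j <;>
    simp [mul_apply, Fin.sum_univ_two, trace_fin_two, det_fin_two, adjugate_fin_two] <;> ring

theorem det_smul_add_smul_one_sub_fin_two {e : Matrix (Fin 2) (Fin 2) R} (htr : e.trace = 1)
    (hdet : e.det = 0) (x y : R) : (x • e + y • (1 - e)).det = x * y := by
  rw [trace_fin_two] at htr
  rw [det_fin_two] at hdet ⊢
  simp [one_fin_two]
  linear_combination (x * y - y ^ 2) * htr + (x - y) ^ 2 * hdet

theorem eq_zero_or_eq_one_or_trace_det_of_isIdempotentElem [IsLocalRing R]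
    {e : Matrix (Fin 2) (Fin 2) R} (he : IsIdempotentElem e) :
    e = 0 ∨ e = 1 ∨ (e.trace = 1 ∧ e.det = 0) := by
  rcases (he.map detMonoidHom).eq_zero_or_eq_one_of_isLocalRing with hdet | hdet
  · have hdet : e.det = 0 := hdet
    have hscal : e = e.trace • e := by
      simpa [hdet, he.eq] using mul_mul_self_fin_two e 1
    have htr : IsIdempotentElem e.trace := by
      have := congrArg trace hscal
      rwa [trace_smul, smul_eq_mul, eq_comm] at this
    rcases htr.eq_zero_or_eq_one_of_isLocalRing with htr | htr
    · exact .inl (by rw [hscal, htr, zero_smul])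
    · exact .inr (.inr ⟨htr, hdet⟩)
  · have hunit : IsUnit e := (isUnit_iff_isUnit_det e).mpr (by simp_all)
    exact .inr (.inl ((IsIdempotentElem.iff_eq_one_of_isUnit hunit).mp he))

theorem eq_smul_add_smul_one_sub_of_commute {e A : Matrix (Fin 2) (Fin 2) R}
    (he : IsIdempotentElem e) (htr : e.trace = 1) (hdet : e.det = 0) (hA : Commute A e) :
    A = (e * A).trace • e + ((1 - e) * A).trace • (1 - e) := by
  have hdet' : (1 - e).det = 0 := by
    simpa using det_smul_add_smul_one_sub_fin_two htr hdet 0 1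
  have hmul : ∀ f : Matrix (Fin 2) (Fin 2) R, IsIdempotentElem f → f.det = 0 → Commute A f →
      A * f = (f * A).trace • f := fun f hf hfd hAf ↦
    calc A * f = f * A * f := by rw [← hAf.eq, mul_assoc, hf.eq]
      _ = (f * A).trace • f := by rw [mul_mul_self_fin_two, hfd, zero_smul, sub_zero]
  rw [← hmul e he hdet hA, ← hmul (1 - e) he.one_sub hdet' ((Commute.one_right A).sub_right hA),
    ← mul_add, add_sub_cancel, mul_one]

end Matrix

theorem IsVeryClean.exists_affine_idempotent_fin_two {R : Type*} [CommRing R] [IsLocalRing R]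
    {A : Matrix (Fin 2) (Fin 2) R} (hA : IsVeryClean A) :
    ∃ x y : R, IsIdempotentElem (x • A + y • 1) ∧
      (IsUnit (A - (x • A + y • 1)) ∨ IsUnit (A + (x • A + y • 1))) := by
  obtain ⟨e, he, hAe, hu⟩ := hA
  rcases Matrix.eq_zero_or_eq_one_or_trace_det_of_isIdempotentElem he with
    rfl | rfl | ⟨htr, hdet⟩
  · refine ⟨0, 0, ?_⟩
    simpa only [zero_smul, add_zero] using And.intro he hu
  · refine ⟨0, 1, ?_⟩
    simpa only [zero_smul, one_smul, zero_add] using And.intro he hu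
  obtain ⟨α, β, hdec⟩ : ∃ α β : R, A = α • e + β • (1 - e) :=
    ⟨_, _, Matrix.eq_smul_add_smul_one_sub_of_commute he htr hdet hAe⟩
  have hdetA : ∀ ε : R, (A + ε • e).det = (α + ε) * β := fun ε ↦ by
    rw [← Matrix.det_smul_add_smul_one_sub_fin_two htr hdet, hdec, add_smul]
    abel_nf
  have hβ : IsUnit β := by
    obtain ⟨ε, hε⟩ : ∃ ε : R, IsUnit (A + ε • e) := hu.elim
      (fun h ↦ ⟨-1, by simpa [sub_eq_add_neg] using h⟩) (fun h ↦ ⟨1, by simpa using h⟩)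
    rw [Matrix.isUnit_iff_isUnit_det, hdetA] at hε
    exact isUnit_of_mul_isUnit_right hε
  by_cases hαβ : IsUnit (α - β)
  · obtain ⟨u, hu'⟩ := hαβ
    refine ⟨↑u⁻¹, -(↑u⁻¹ * β), ?_⟩
    have he' : (↑u⁻¹ : R) • A + -(↑u⁻¹ * β) • 1 = e :=
      calc _ = (↑u⁻¹ * (α - β)) • e := by rw [hdec]; module
        _ = e := by rw [← hu', Units.inv_mul, one_smul]
    rw [he']
    exact ⟨he, hu⟩
  · have hα : IsUnit α := by
      refine (IsLocalRing.isUnit_or_isUnit_of_isUnit_add (b := -(α - β)) ?_).resolve_right ?_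
      · simpa using hβ
      · rwa [IsUnit.neg_iff]
    refine ⟨0, 0, ?_⟩
    simp only [zero_smul, add_zero, sub_zero, or_self]
    refine ⟨.zero, ?_⟩
    rw [Matrix.isUnit_iff_isUnit_det, ← add_zero A, ← zero_smul R e, hdetA, add_zero]
    exact hα.mul hβ

theorem Matrix.isVeryClean_map_iff_fin_two {S R : Type*} [CommRing S] [CommRing R]
    [IsLocalRing R] {φ : S →+* R} (hφ : Function.Surjective φ)
    (hker : ∀ s ∈ RingHom.ker φ, IsNilpotent s) (A : Matrix (Fin 2) (Fin 2) S) :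
    IsVeryClean A ↔ IsVeryClean (A.map φ) := by
  refine ⟨fun hA ↦ hA.map φ.mapMatrix, fun hA ↦ ?_⟩
  change IsVeryClean (φ.mapMatrix A) at hA
  obtain ⟨x, y, hidem, hu⟩ := hA.exists_affine_idempotent_fin_two
  obtain ⟨x', rfl⟩ := hφ x
  obtain ⟨y', rfl⟩ := hφ y
  have hc : φ.mapMatrix (x' • A + y' • 1) = φ x' • φ.mapMatrix A + φ y' • 1 := by
    ext i j
    simp [Matrix.one_apply, apply_ite φ]
  rw [← hc] at hidem hu
  exact IsVeryClean.of_map_of_ker_isNilpotent (RingHom.mapMatrix_surjective (n := Fin 2) hφ)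
    (RingHom.ker_mapMatrix_isNilpotent (n := Fin 2) hker)
    (((Commute.refl A).smul_right x').add_right ((Commute.one_right A).smul_right y')) hidem hu

theorem constantCoeffQuot_mk (R : Type*) [CommRing R] (m : ℕ) (hm : 1 ≤ m) (f : PowerSeries R) :
    constantCoeffQuot R m hm (Ideal.Quotient.mk _ f) = PowerSeries.constantCoeff f :=
  rfl

theorem constantCoeffQuot_surjective (R : Type*) [CommRing R] (m : ℕ) (hm : 1 ≤ m) :
    Function.Surjective (constantCoeffQuot R m hm) :=
  fun r ↦ ⟨Ideal.Quotient.mk _ (PowerSeries.C r), by simp [constantCoeffQuot_mk]⟩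

theorem isNilpotent_of_mem_ker_constantCoeffQuot (R : Type*) [CommRing R] (m : ℕ) (hm : 1 ≤ m) :
    ∀ s ∈ RingHom.ker (constantCoeffQuot R m hm), IsNilpotent s := by
  intro s hs
  obtain ⟨f, rfl⟩ := Ideal.Quotient.mk_surjective s
  obtain ⟨g, rfl⟩ := PowerSeries.X_dvd_iff.mpr (by simpa [constantCoeffQuot_mk] using hs)
  refine ⟨m, ?_⟩
  rw [← map_pow, Ideal.Quotient.eq_zero_iff_mem, mul_pow, Ideal.mem_span_singleton]
  exact dvd_mul_right _ _

theorem M2_powerSeries_quot_very_clean_iff (R : Type*) [CommRing R] [IsLocalRing R]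
    (m : ℕ) (hm : 1 ≤ m)
    (A : Matrix (Fin 2) (Fin 2)
      (PowerSeries R ⧸ Ideal.span {(PowerSeries.X : PowerSeries R) ^ m})) :
    IsVeryClean A ↔ IsVeryClean (A.map (constantCoeffQuot R m hm)) :=
  Matrix.isVeryClean_map_iff_fin_two (constantCoeffQuot_surjective R m hm)
    (isNilpotent_of_mem_ker_constantCoeffQuot R m hm) A
end

section
/- Let R be a weakly bleached local ring and let A(x) ∈ T_2(R[[x]]) be a 2×2 upper triangular matrix with power series entries, with A(0) ∈ T_2(R) the matrix of constant coefficients. Then A(x) is very clean in T_2(R[[x]]) if and only if A(0) is very clean in T_2(R). -/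
/-- A local ring `R` is *weakly bleached* if for every `a ∈ 1 + J(R)` and every `b ∈ J(R)`,
the abelian group endomorphisms `x ↦ a * x - x * b` and `x ↦ b * x - x * a` of `R`
are both surjective. -/
def WeaklyBleached (R : Type*) [Ring R] : Prop :=
  ∀ a b : R, a - 1 ∈ (⊥ : Ideal R).jacobson → b ∈ (⊥ : Ideal R).jacobson →
    Function.Surjective (fun x : R => a * x - x * b) ∧
    Function.Surjective (fun x : R => b * x - x * a)

/-!
Both sides are always true: `T₂(S)` is strongly clean for every weakly bleached local ring `S`,
and `R⟦X⟧` is again weakly bleached and local.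

For `A = !![a, c; 0, b]` over a local ring, every `d` has `d` or `d - 1` a unit. When neither
`e = 0` nor `e = 1` makes `A - e` invertible, one diagonal entry of `A` lies in `J` and the other
in `1 + J`; then `e = !![0, s; 0, 1]` or `e = !![1, s; 0, 0]` commutes with `A` exactly when `s`
solves a Sylvester equation `a * s - s * b = ±c`, and weak bleachedness solves it.

Over `R⟦X⟧`, units are detected on constant coefficients, the constant coefficient map sends the
Jacobson radical into that of `R`, and a Sylvester equation can be solved coefficient by
coefficient, since the `n`-th coefficient of `a * s - s * b` is `a₀ * sₙ - sₙ * b₀` plus terms in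
lower coefficients of `s`.
-/

open PowerSeries

namespace IsLocalRing

variable {R : Type*} [Ring R] [IsLocalRing R]

instance : IsDedekindFiniteMonoid R where
  mul_eq_one_symm {a b} hab := by
    have hba : IsIdempotentElem (b * a) := by
      rw [IsIdempotentElem, mul_assoc, ← mul_assoc a, hab, one_mul]
    rcases isUnit_or_isUnit_of_add_one (add_sub_cancel (b * a) 1) with hu | hu
    · exact (IsIdempotentElem.iff_eq_one_of_isUnit hu).mp hba
    · have h0 : b * a = 0 := by
        simpa using (IsIdempotentElem.iff_eq_one_of_isUnit hu).mp hba.one_sub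
      have : (1 : R) = 0 :=
        calc (1 : R) = a * b * (a * b) := by rw [hab, one_mul]
          _ = a * (b * a) * b := by simp only [mul_assoc]
          _ = 0 := by rw [h0, mul_zero, zero_mul]
      exact absurd this one_ne_zero

theorem isUnit_or_isUnit_sub_one (a : R) : IsUnit a ∨ IsUnit (a - 1) := by
  refine (isUnit_or_isUnit_of_add_one (add_sub_cancel a 1)).imp_right fun h => ?_
  simpa using h.neg

theorem mem_jacobson_bot_of_not_isUnit {a : R} (ha : ¬IsUnit a) :
    a ∈ (⊥ : Ideal R).jacobson := by
  refine Ideal.mem_jacobson_iff.mpr fun y => ?_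
  have hya : ¬IsUnit (-(y * a)) := by
    rintro ⟨u, hu⟩
    refine ha (.of_mul_eq_one_right (-(↑u⁻¹ * y)) ?_)
    rw [neg_mul, mul_assoc, ← mul_neg, ← hu, u.inv_mul]
  obtain ⟨v, hv⟩ :=
    (isUnit_or_isUnit_of_add_one (neg_add_cancel_left (y * a) 1)).resolve_left hya
  refine ⟨↑v⁻¹, ?_⟩
  rw [Ideal.mem_bot, mul_assoc, ← mul_add_one (↑v⁻¹ : R), ← hv, v.inv_mul, sub_self]

end IsLocalRing

theorem Ideal.apply_mem_jacobson_bot_of_surjective {R S : Type*} [Ring R] [Ring S] {f : R →+* S}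
    (hf : Function.Surjective f) {a : R} (ha : a ∈ (⊥ : Ideal R).jacobson) :
    f a ∈ (⊥ : Ideal S).jacobson := by
  refine Ideal.mem_jacobson_iff.mpr fun y => ?_
  obtain ⟨x, rfl⟩ := hf y
  obtain ⟨z, hz⟩ := Ideal.mem_jacobson_iff.mp ha x
  refine ⟨f z, ?_⟩
  rw [Ideal.mem_bot] at hz ⊢
  simpa using congrArg f hz

namespace PowerSeries

variable {R : Type*} [Ring R]

theorem coeff_mul_sub_mul (a b s : R⟦X⟧) (n : ℕ) :
    coeff n (a * s - s * b) =
      ∑ i ∈ Finset.range (n + 1), (coeff (n - i) a * coeff i s - coeff i s * coeff (n - i) b) := by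
  rw [map_sub, coeff_mul, coeff_mul, Finset.sum_sub_distrib, ← Finset.Nat.sum_antidiagonal_swap]
  simp only [Prod.fst_swap, Prod.snd_swap]
  rw [Finset.Nat.sum_antidiagonal_eq_sum_range_succ (fun i j => coeff j a * coeff i s),
    Finset.Nat.sum_antidiagonal_eq_sum_range_succ (fun i j => coeff i s * coeff j b)]

/-- The coefficients of a solution `s` of `a * s - s * b = c`, given a right inverse `σ` of
`y ↦ a₀ * y - y * b₀`. -/
noncomputable def sylvesterCoeff (σ : R → R) (a b c : R⟦X⟧) (n : ℕ) : R :=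
  σ (coeff n c - ∑ i : Fin n,
    (coeff (n - i) a * sylvesterCoeff σ a b c i - sylvesterCoeff σ a b c i * coeff (n - i) b))
termination_by n
decreasing_by exact i.2

theorem surjective_mul_sub_mul {a b : R⟦X⟧}
    (h : Function.Surjective fun y : R => constantCoeff a * y - y * constantCoeff b) :
    Function.Surjective fun s : R⟦X⟧ => a * s - s * b := by
  choose σ hσ using h
  intro c
  set s := sylvesterCoeff σ a b c with hs
  refine ⟨mk s, ?_⟩
  ext n
  have hn : constantCoeff a * s n - s n * constantCoeff b =
      coeff n c - ∑ i : Fin n, (coeff (n - i) a * s i - s i * coeff (n - i) b) := by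
    conv_lhs => rw [hs, sylvesterCoeff]
    exact hσ _
  rw [coeff_mul_sub_mul, Finset.sum_range_succ, Nat.sub_self, coeff_zero_eq_constantCoeff_apply,
    coeff_zero_eq_constantCoeff_apply, coeff_mk, hn, ← Fin.sum_univ_eq_sum_range]
  simp only [coeff_mk]
  abel

instance [IsLocalRing R] : IsLocalRing R⟦X⟧ :=
  .of_isUnit_or_isUnit_one_sub_self fun f => by
    simpa [isUnit_iff_constantCoeff] using
      IsLocalRing.isUnit_or_isUnit_of_add_one (add_sub_cancel (constantCoeff f) 1)

end PowerSeries

theorem WeaklyBleached.powerSeries {R : Type*} [Ring R] (hR : WeaklyBleached R) :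
    WeaklyBleached R⟦X⟧ := by
  intro a b ha hb
  have hconst : Function.Surjective (constantCoeff (R := R)) :=
    fun r => ⟨C r, constantCoeff_C r⟩
  have := hR (constantCoeff a) (constantCoeff b)
    (by simpa using Ideal.apply_mem_jacobson_bot_of_surjective hconst ha)
    (Ideal.apply_mem_jacobson_bot_of_surjective hconst hb)
  exact ⟨surjective_mul_sub_mul this.1, surjective_mul_sub_mul this.2⟩

theorem IsStronglyClean.isVeryClean {R : Type*} [Ring R] {a : R} (h : IsStronglyClean a) :
    IsVeryClean a :=
  let ⟨e, he, hcomm, hu⟩ := h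
  ⟨e, he, hcomm, .inl hu⟩

namespace T2

variable {S : Type*} [Ring S]

def ofEntries (a c b : S) : T2 S := ⟨!![a, c; 0, b], rfl⟩

theorem eq_ofEntries (A : T2 S) : A = ofEntries (A.1 0 0) (A.1 0 1) (A.1 1 1) := by
  ext i j
  fin_cases i <;> fin_cases j <;> simp [ofEntries, mem_T2_iff.mp A.2]

theorem ofEntries_mul (a c b a' c' b' : S) :
    ofEntries a c b * ofEntries a' c' b' = ofEntries (a * a') (a * c' + c * b') (b * b') := by
  ext i j
  fin_cases i <;> fin_cases j <;> simp [ofEntries]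

theorem ofEntries_sub (a c b a' c' b' : S) :
    ofEntries a c b - ofEntries a' c' b' = ofEntries (a - a') (c - c') (b - b') := by
  ext i j
  fin_cases i <;> fin_cases j <;> simp [ofEntries]

theorem one_eq_ofEntries : (1 : T2 S) = ofEntries 1 0 1 := by
  ext i j
  fin_cases i <;> fin_cases j <;> simp [ofEntries]

theorem isUnit_ofEntries {a b : S} (c : S) (ha : IsUnit a) (hb : IsUnit b) :
    IsUnit (ofEntries a c b) := by
  obtain ⟨u, rfl⟩ := ha
  obtain ⟨v, rfl⟩ := hb
  refine ⟨⟨ofEntries u c v, ofEntries ↑u⁻¹ (-(↑u⁻¹ * c * ↑v⁻¹)) ↑v⁻¹, ?_, ?_⟩, rfl⟩ <;>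
    simp [ofEntries_mul, one_eq_ofEntries, mul_assoc]

variable {a b c : S}

theorem isStronglyClean_ofEntries_of_isUnit (ha : IsUnit a) (hb : IsUnit b) :
    IsStronglyClean (ofEntries a c b) :=
  ⟨0, .zero, by rw [mul_zero, zero_mul], by rw [sub_zero]; exact isUnit_ofEntries c ha hb⟩

theorem isStronglyClean_ofEntries_of_isUnit_sub_one (ha : IsUnit (a - 1)) (hb : IsUnit (b - 1)) :
    IsStronglyClean (ofEntries a c b) :=
  ⟨1, .one, by rw [mul_one, one_mul], by
    rw [one_eq_ofEntries, ofEntries_sub, sub_zero]; exact isUnit_ofEntries c ha hb⟩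

theorem isStronglyClean_ofEntries_of_mul_add_eq {s : S} (ha : IsUnit a) (hb : IsUnit (b - 1))
    (hs : a * s + c = s * b) : IsStronglyClean (ofEntries a c b) := by
  refine ⟨ofEntries 0 s 1, ?_, ?_, ?_⟩
  · simp [IsIdempotentElem, ofEntries_mul]
  · simp [ofEntries_mul, hs]
  · rw [ofEntries_sub, sub_zero]
    exact isUnit_ofEntries _ ha hb

theorem isStronglyClean_ofEntries_of_mul_eq_add {s : S} (ha : IsUnit (a - 1)) (hb : IsUnit b)
    (hs : a * s = c + s * b) : IsStronglyClean (ofEntries a c b) := by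
  refine ⟨ofEntries 1 s 0, ?_, ?_, ?_⟩
  · simp [IsIdempotentElem, ofEntries_mul]
  · simp [ofEntries_mul, hs]
  · rw [ofEntries_sub, sub_zero]
    exact isUnit_ofEntries _ ha hb

end T2

open IsLocalRing in
theorem WeaklyBleached.stronglyCleanRing_T2 {S : Type*} [Ring S] [IsLocalRing S]
    (hS : WeaklyBleached S) : StronglyCleanRing (T2 S) := by
  intro A
  obtain ⟨a, c, b, rfl⟩ : ∃ a c b, A = T2.ofEntries a c b := ⟨_, _, _, T2.eq_ofEntries A⟩
  by_cases ha1 : IsUnit (a - 1) <;> by_cases hb1 : IsUnit (b - 1)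
  · exact T2.isStronglyClean_ofEntries_of_isUnit_sub_one ha1 hb1
  · have hb := (isUnit_or_isUnit_sub_one b).resolve_right hb1
    by_cases ha : IsUnit a
    · exact T2.isStronglyClean_ofEntries_of_isUnit ha hb
    obtain ⟨s, hs : a * s - s * b = c⟩ := (hS b a (mem_jacobson_bot_of_not_isUnit hb1)
      (mem_jacobson_bot_of_not_isUnit ha)).2 c
    exact T2.isStronglyClean_ofEntries_of_mul_eq_add ha1 hb (sub_eq_iff_eq_add.mp hs)
  · have ha := (isUnit_or_isUnit_sub_one a).resolve_right ha1
    by_cases hb : IsUnit b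
    · exact T2.isStronglyClean_ofEntries_of_isUnit ha hb
    obtain ⟨s, hs : a * s - s * b = -c⟩ := (hS a b (mem_jacobson_bot_of_not_isUnit ha1)
      (mem_jacobson_bot_of_not_isUnit hb)).1 (-c)
    exact T2.isStronglyClean_ofEntries_of_mul_add_eq ha hb1
      (by rw [← sub_eq_zero, add_sub_right_comm, hs, neg_add_cancel])
  · exact T2.isStronglyClean_ofEntries_of_isUnit
      ((isUnit_or_isUnit_sub_one a).resolve_right ha1)
      ((isUnit_or_isUnit_sub_one b).resolve_right hb1)

theorem T2_powerSeries_very_clean_iff (R : Type*) [Ring R] [IsLocalRing R]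
    (hR : WeaklyBleached R) (A : T2 (PowerSeries R)) :
    IsVeryClean A ↔
      IsVeryClean
        (⟨(A : Matrix (Fin 2) (Fin 2) (PowerSeries R)).map PowerSeries.constantCoeff,
          by rw [mem_T2_iff, Matrix.map_apply, mem_T2_iff.mp A.2, map_zero]⟩ : T2 R) :=
  iff_of_true (hR.powerSeries.stronglyCleanRing_T2 A).isVeryClean
    (hR.stronglyCleanRing_T2 _).isVeryClean
end
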